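/- Let (Ω, F, P) be a probability space with filtration {F_i}, T a stopping time, ε > 0, and {X_i} a nonnegative integrable adapted process satisfying E[X_{i+1} | F_i] ≤ X_i − ε·1_{T > i} for all i. Then E[T] ≤ E[X_0]/ε. -/

import Mathlib

open MeasureTheory
open scoped ENNReal

/-!
Write `S i = {i < T}`. Integrating the drift condition gives
`E[X (i+1)] + ε P(S i) ≤ E[X i]`, so by telescoping and `X ≥ 0` every partial sum
`ε ∑_{i<n} P(S i)` is at most `E[X 0]`. The tail-sum formula `E[T] = ∑ i, P(T > i)` concludes.
-/

lemma ENat.toENNReal_eq_tsum_ite (n : ℕ∞) :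
    (n : ℝ≥0∞) = ∑' i : ℕ, if (i : ℕ∞) < n then 1 else 0 := by
  induction n using ENat.recTopCoe with
  | top => simp
  | coe k =>
    have hsupp : ∀ i ∉ Finset.range k, (if (i : ℕ∞) < k then (1 : ℝ≥0∞) else 0) = 0 :=
      fun i hi => if_neg (by simpa using hi)
    rw [tsum_eq_sum hsupp, Finset.sum_congr rfl fun i hi => if_pos (by simpa using hi)]
    simp

lemma Finset.sum_range_le_of_add_le {a b : ℕ → ℝ} (ha : ∀ n, 0 ≤ a n)
    (h : ∀ i, a (i + 1) + b i ≤ a i) (n : ℕ) : ∑ i ∈ Finset.range n, b i ≤ a 0 :=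
  calc ∑ i ∈ Finset.range n, b i ≤ ∑ i ∈ Finset.range n, (a i - a (i + 1)) :=
        Finset.sum_le_sum fun i _ => by linarith [h i]
    _ = a 0 - a n := Finset.sum_range_sub' a n
    _ ≤ a 0 := by linarith [ha n]

namespace MeasureTheory

variable {Ω : Type*} {m m0 : MeasurableSpace Ω} {μ : Measure Ω}

lemma lintegral_enat_eq_tsum_measure_lt {T : Ω → ℕ∞}
    (hT : ∀ i : ℕ, MeasurableSet {ω | (i : ℕ∞) < T ω}) :
    ∫⁻ ω, (T ω : ℝ≥0∞) ∂μ = ∑' i : ℕ, μ {ω | (i : ℕ∞) < T ω} := by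
  have hpt : ∀ ω, (T ω : ℝ≥0∞) =
      ∑' i : ℕ, {ω | (i : ℕ∞) < T ω}.indicator (fun _ => (1 : ℝ≥0∞)) ω := fun ω => by
    simp only [ENat.toENNReal_eq_tsum_ite (T ω), Set.indicator, Set.mem_ofPred_eq]
  simp_rw [hpt]
  rw [lintegral_tsum fun i => (measurable_const.indicator (hT i)).aemeasurable]
  simp_rw [lintegral_indicator_const (hT _), one_mul]

lemma tsum_measure_le_ofReal_of_sum_measureReal_le [IsFiniteMeasure μ] {S : ℕ → Set Ω} {c : ℝ}
    (h : ∀ n, ∑ i ∈ Finset.range n, μ.real (S i) ≤ c) :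
    ∑' i, μ (S i) ≤ ENNReal.ofReal c := by
  refine ENNReal.tsum_le_of_sum_range_le fun n => ?_
  rw [Finset.sum_congr rfl fun i _ => (ofReal_measureReal (μ := μ) (s := S i)).symm,
    ← ENNReal.ofReal_sum_of_nonneg fun i _ => measureReal_nonneg]
  exact ENNReal.ofReal_le_ofReal (h n)

lemma integral_le_of_condExp_le (hm : m ≤ m0) [SigmaFinite (μ.trim hm)] {f g : Ω → ℝ}
    (hg : Integrable g μ) (h : μ[f|m] ≤ᵐ[μ] g) : ∫ ω, f ω ∂μ ≤ ∫ ω, g ω ∂μ := by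
  rw [← integral_condExp hm]
  exact integral_mono_ae integrable_condExp hg h

lemma integral_add_mul_measureReal_le_of_condExp_le [IsFiniteMeasure μ] (hm : m ≤ m0)
    [SigmaFinite (μ.trim hm)] {f g : Ω → ℝ} {S : Set Ω} {c : ℝ} (hg : Integrable g μ)
    (hS : MeasurableSet S) (h : μ[f|m] ≤ᵐ[μ] fun ω => g ω - S.indicator (fun _ => c) ω) :
    ∫ ω, f ω ∂μ + c * μ.real S ≤ ∫ ω, g ω ∂μ := by
  have hind : Integrable (S.indicator fun _ => c) μ :=
    (integrable_indicator_iff hS).2 (integrableOn_const (measure_ne_top _ _) enorm_ne_top)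
  have : ∫ ω, f ω ∂μ ≤ ∫ ω, g ω - S.indicator (fun _ => c) ω ∂μ :=
    integral_le_of_condExp_le hm (hg.sub hind) h
  rw [integral_sub hg hind, integral_indicator_const c hS, smul_eq_mul] at this
  linarith

end MeasureTheory

theorem stmt_3_general {Ω : Type*} {m0 : MeasurableSpace Ω} (P : Measure Ω) [IsProbabilityMeasure P]
    (ℱ : Filtration ℕ m0) (X : ℕ → Ω → ℝ)
    (hnn : ∀ i ω, 0 ≤ X i ω) (hint : ∀ i, Integrable (X i) P)
    (T : Ω → ℕ∞) (hT : ∀ i : ℕ, MeasurableSet[ℱ i] {ω | T ω ≤ (i : ℕ∞)})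
    (ε : ℝ) (hε : 0 < ε)
    (hrank : ∀ i : ℕ, ∀ᵐ ω ∂P,
      (P[X (i + 1) | ℱ i]) ω ≤ X i ω - Set.indicator {ω' | (i : ℕ∞) < T ω'} (fun _ => ε) ω) :
    ∫⁻ ω, (T ω : ℝ≥0∞) ∂P ≤ ENNReal.ofReal ((∫ ω, X 0 ω ∂P) / ε) := by
  have hS : ∀ i : ℕ, MeasurableSet {ω | (i : ℕ∞) < T ω} := fun i => by
    simpa only [Set.compl_ofPred, not_le] using (ℱ.le i _ (hT i)).compl
  have hdrift : ∀ i, ∫ ω, X (i + 1) ω ∂P + ε * P.real {ω | (i : ℕ∞) < T ω} ≤ ∫ ω, X i ω ∂P :=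
    fun i => integral_add_mul_measureReal_le_of_condExp_le (ℱ.le i) (hint i) (hS i) (hrank i)
  rw [lintegral_enat_eq_tsum_measure_lt hS]
  refine tsum_measure_le_ofReal_of_sum_measureReal_le fun n => ?_
  rw [le_div_iff₀' hε, Finset.mul_sum]
  exact Finset.sum_range_le_of_add_le (fun i => integral_nonneg (hnn i)) hdrift n

/-- Quantitative 1-dimensional ranking supermartingale bound: the expected value
of the stopping time is at most `E[X 0] / ε`. -/
theorem stmt_3 {Ω : Type*} {m0 : MeasurableSpace Ω} (P : Measure Ω) [IsProbabilityMeasure P]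
    (ℱ : Filtration ℕ m0) (X : ℕ → Ω → ℝ) (hadp : Adapted ℱ X)
    (hnn : ∀ i ω, 0 ≤ X i ω) (hint : ∀ i, Integrable (X i) P)
    (T : Ω → ℕ∞) (hT : ∀ i : ℕ, MeasurableSet[ℱ i] {ω | T ω ≤ (i : ℕ∞)})
    (ε : ℝ) (hε : 0 < ε)
    (hrank : ∀ i : ℕ, ∀ᵐ ω ∂P,
      (P[X (i + 1) | ℱ i]) ω ≤ X i ω - Set.indicator {ω' | (i : ℕ∞) < T ω'} (fun _ => ε) ω) :
    ∫⁻ ω, (T ω : ℝ≥0∞) ∂P ≤ ENNReal.ofReal ((∫ ω, X 0 ω ∂P) / ε) :=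
  stmt_3_general P ℱ X hnn hint T hT ε hε hrank
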